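/- arXiv:1607.01228 — 5 statements merged into one kernel-verified Lean document; each statement's English description precedes it below -/
import Mathlib

section
/- The transversal monomial ideal of degree n-1 satisfies the decomposition I_{n,n-1} = Σ_{i=1}^{n-1} P_1···P_{i-1}·(P_i + P_{i+1})·P_{i+2}···P_n. -/
open MvPolynomial

/-- The ideal generated by the variables `x_{j,0}, …, x_{j,b j - 1}` (the `j`-th block). -/
noncomputable def PId (k : Type*) [Field k] (b : ℕ → ℕ) (j : ℕ) :
    Ideal (MvPolynomial (ℕ × ℕ) k) :=
  Ideal.span {f | ∃ i < b j, f = X (j, i)}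

/-- The transversal monomial ideal `I_{p,q} = Σ_{j_1<⋯<j_q < p} P_{j_1}⋯P_{j_q}`
(indices zero-based). -/
noncomputable def TId (k : Type*) [Field k] (b : ℕ → ℕ) (p q : ℕ) :
    Ideal (MvPolynomial (ℕ × ℕ) k) :=
  ⨆ (s : Finset ℕ) (_ : s.card = q ∧ s ⊆ Finset.range p), ∏ j ∈ s, PId k b j

/-- `Q_{r} = Σ_{j=r}^{n-1} P_j` (zero-based). -/
noncomputable def QId (k : Type*) [Field k] (b : ℕ → ℕ) (r n : ℕ) :
    Ideal (MvPolynomial (ℕ × ℕ) k) :=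
  ∑ j ∈ Finset.Ico r n, PId k b j

/-!
A subset of `{0, …, n-1}` of size `n - 1` misses exactly one index `m`, so `I_{n,n-1}` is the sum
of the `n` products `A_m = ∏_{j ≠ m} P_j`. The `i`-th summand on the right distributes to
`A_i + A_{i+1}`, and since ideal addition is idempotent, the sum of these consecutive pairs is
again the sum of all the `A_m`.
-/

namespace Finset

theorem iSup_card_eq_and_subset_eq_iSup_erase {α β : Type*} [DecidableEq α] [CompleteLattice β]
    (t : Finset α) {q : ℕ} (hq : t.card = q + 1) (F : Finset α → β) :
    ⨆ (s : Finset α) (_ : s.card = q ∧ s ⊆ t), F s = ⨆ a ∈ t, F (t.erase a) := by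
  apply le_antisymm
  · refine iSup₂_le fun s ⟨hcard, hst⟩ => ?_
    have hcov : s ⋖ t :=
      covBy_iff_card_sdiff_eq_one.2 ⟨hst, by rw [card_sdiff_of_subset hst]; omega⟩
    obtain ⟨a, ha, rfl⟩ := covBy_iff_exists_erase.1 hcov
    exact le_iSup₂_of_le a ha le_rfl
  · refine iSup₂_le fun a ha => le_iSup₂_of_le (t.erase a) ⟨?_, erase_subset a t⟩ le_rfl
    rw [card_erase_of_mem ha, hq, Nat.add_sub_cancel]

theorem sup_range_sup_succ {β : Type*} [SemilatticeSup β] [OrderBot β] (g : ℕ → β) (n : ℕ) :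
    (range (n + 1)).sup (fun i => g i ⊔ g (i + 1)) = (range (n + 2)).sup g := by
  apply le_antisymm
  · refine Finset.sup_le fun i hi => sup_le ?_ ?_ <;>
      exact le_sup (mem_range.2 (by rw [mem_range] at hi; omega))
  · refine Finset.sup_le fun m hm => ?_
    rcases Nat.lt_succ_iff_lt_or_eq.1 (mem_range.1 hm) with hm | rfl
    · exact le_sup_left.trans (le_sup (f := fun i => g i ⊔ g (i + 1)) (mem_range.2 hm))
    · exact le_sup_right.trans (le_sup (f := fun i => g i ⊔ g (i + 1)) (self_mem_range_succ n))

theorem prod_range_erase {M : Type*} [CommMonoid M] (f : ℕ → M) {m n : ℕ} (h : m < n) :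
    ∏ j ∈ (range n).erase m, f j = (∏ j ∈ range m, f j) * ∏ j ∈ Ico (m + 1) n, f j := by
  rw [← prod_union]
  · congr 1
    ext j
    simp only [mem_erase, mem_range, mem_union, mem_Ico]
    omega
  · exact disjoint_left.2 fun j hj hj' => by
      rw [mem_range] at hj; rw [mem_Ico] at hj'; omega

theorem prod_range_erase_add_prod_range_erase_succ {R : Type*} [CommSemiring R] (f : ℕ → R)
    {i n : ℕ} (h : i + 1 < n) :
    ∏ j ∈ (range n).erase i, f j + ∏ j ∈ (range n).erase (i + 1), f j =
      (∏ j ∈ range i, f j) * (f i + f (i + 1)) * ∏ j ∈ Ico (i + 2) n, f j := by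
  rw [prod_range_erase f (by omega : i < n), prod_range_erase f h, prod_range_succ,
    prod_eq_prod_Ico_succ_bot h]
  ring

end Finset

open Finset in
/-- `I_{n,n-1} = Σ_{i=1}^{n-1} P_1⋯P_{i-1}(P_i+P_{i+1})P_{i+2}⋯P_n`
(zero-based: the `i`-th summand is `(∏_{j<i} P_j)·(P_i+P_{i+1})·(∏_{i+1<j<n} P_j)`). -/
theorem transversal_deg_sub_one (k : Type*) [Field k] (b : ℕ → ℕ) (n : ℕ) (hn : 2 ≤ n) :
    TId k b n (n - 1) =
      ∑ i ∈ Finset.range (n - 1),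
        (∏ j ∈ Finset.range i, PId k b j) * (PId k b i + PId k b (i + 1)) *
          ∏ j ∈ Finset.Ico (i + 2) n, PId k b j := by
  obtain ⟨n, rfl⟩ := Nat.exists_eq_add_of_le' hn
  set A : ℕ → Ideal (MvPolynomial (ℕ × ℕ) k) := fun m => ∏ j ∈ (range (n + 2)).erase m, PId k b j
  have hT : TId k b (n + 2) (n + 1) = (range (n + 2)).sup A := by
    rw [TId, iSup_card_eq_and_subset_eq_iSup_erase _ (card_range _), Finset.sup_eq_iSup]
  have hsummand : ∀ i ∈ range (n + 1),
      (∏ j ∈ range i, PId k b j) * (PId k b i + PId k b (i + 1)) *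
        ∏ j ∈ Ico (i + 2) (n + 2), PId k b j = A i ⊔ A (i + 1) := fun i hi => by
    rw [← Submodule.add_eq_sup,
      prod_range_erase_add_prod_range_erase_succ _ (by rw [mem_range] at hi; omega)]
  rw [show n + 2 - 1 = n + 1 by omega, hT, sum_congr rfl hsummand, Ideal.sum_eq_sup, sup_range_sup_succ]
end

section
/- For all t with 2 ≤ t ≤ n, the transversal monomial ideal satisfies I_{n,t} = Σ_{i=t-1}^{n-1} I_{i,t-1}·Q_{i+1}, where Q_r = P_r + P_{r+1} + ··· + P_n. -/
open MvPolynomial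

/-!
Sort the blocks `j₁ < ⋯ < j_t` of a transversal product by their largest index `m = j_t`:
the remaining `t - 1` indices lie below `m`, so the product lies in `I_{m,t-1} · P_m`, and
`P_m ≤ Q_m`. Conversely a product in `I_{i,t-1} · P_j` with `i ≤ j` uses `t - 1` blocks
below `i` and one more block `j`, hence is transversal.
-/

open Finset

theorem Finset.erase_max'_subset_range {s : Finset ℕ} (hs : s.Nonempty) :
    s.erase (s.max' hs) ⊆ range (s.max' hs) := fun j hj =>
  mem_range.2 ((s.le_max' j (mem_of_mem_erase hj)).lt_of_ne (ne_of_mem_erase hj))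

namespace Ideal

variable {R : Type*} [CommSemiring R]

def transversal (P : ℕ → Ideal R) (p q : ℕ) : Ideal R :=
  ⨆ (s : Finset ℕ) (_ : s.card = q ∧ s ⊆ range p), ∏ j ∈ s, P j

variable (P : ℕ → Ideal R)

theorem prod_le_transversal {p : ℕ} {s : Finset ℕ} (hs : s ⊆ range p) :
    ∏ j ∈ s, P j ≤ transversal P p s.card :=
  le_iSup₂_of_le s ⟨rfl, hs⟩ le_rfl

theorem transversal_le_iff {p q : ℕ} {I : Ideal R} :
    transversal P p q ≤ I ↔ ∀ s : Finset ℕ, s.card = q → s ⊆ range p → ∏ j ∈ s, P j ≤ I := by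
  simp only [transversal, iSup_le_iff, and_imp]

theorem prod_le_transversal_max'_mul {s : Finset ℕ} (hs : s.Nonempty) :
    ∏ j ∈ s, P j ≤ transversal P (s.max' hs) (s.card - 1) * P (s.max' hs) := by
  have hmem := s.max'_mem hs
  rw [← prod_erase_mul s P hmem, ← card_erase_of_mem hmem]
  exact mul_mono_left (prod_le_transversal P (erase_max'_subset_range hs))

theorem transversal_mul_le_transversal_succ {q i j n : ℕ} (hij : i ≤ j) (hjn : j < n) :
    transversal P i q * P j ≤ transversal P n (q + 1) := by
  rw [transversal, iSup_mul]
  refine iSup_le fun s => ?_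
  rw [iSup_mul]
  refine iSup_le fun ⟨hcard, hs⟩ => ?_
  have hjs : j ∉ s := fun h => (mem_range.1 (hs h)).not_ge hij
  rw [mul_comm, ← prod_insert hjs, ← hcard, ← card_insert_of_notMem hjs]
  refine prod_le_transversal P (insert_subset (mem_range.2 hjn) (hs.trans ?_))
  exact range_subset_range.2 (hij.trans hjn.le)

theorem transversal_succ_eq_sum (n q : ℕ) :
    transversal P n (q + 1) =
      ∑ i ∈ Icc q (n - 1), transversal P i q * ∑ j ∈ Ico i n, P j := by
  apply le_antisymm
  · refine (transversal_le_iff P).2 fun s hcard hs => ?_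
    have hne : s.Nonempty := card_pos.1 (by omega)
    set m := s.max' hne
    have hmn : m < n := mem_range.1 (hs (s.max'_mem hne))
    have hqm : q ≤ m := by
      simpa [card_erase_of_mem (s.max'_mem hne), hcard] using
        card_le_card (erase_max'_subset_range hne)
    calc ∏ j ∈ s, P j ≤ transversal P m q * P m := by
          simpa only [hcard, Nat.add_sub_cancel] using prod_le_transversal_max'_mul P hne
      _ ≤ transversal P m q * ∑ j ∈ Ico m n, P j :=
          mul_mono_right (single_le_sum (f := P) (fun _ _ => zero_le) (by simp [hmn]))
      _ ≤ _ := single_le_sum (f := fun i => transversal P i q * ∑ j ∈ Ico i n, P j)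
          (fun _ _ => zero_le) (mem_Icc.2 ⟨hqm, by omega⟩)
  · rw [sum_eq_sup, Finset.sup_le_iff]
    intro i _
    rw [mul_sum, sum_eq_sup, Finset.sup_le_iff]
    intro j hj
    exact transversal_mul_le_transversal_succ P (mem_Ico.1 hj).1 (mem_Ico.1 hj).2

end Ideal

theorem transversal_decomposition_general (k : Type*) [Field k] (b : ℕ → ℕ) (n t : ℕ)
    (ht : 2 ≤ t) :
    TId k b n t =
      ∑ i ∈ Finset.Icc (t - 1) (n - 1), TId k b i (t - 1) * QId k b i n := by
  obtain ⟨q, rfl⟩ : ∃ q, t = q + 1 := ⟨t - 1, by omega⟩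
  -- `TId k b` is `Ideal.transversal (PId k b)` by definition, and `QId` is the inner sum.
  exact Ideal.transversal_succ_eq_sum (PId k b) n q

/-- for `2 ≤ t ≤ n`, `I_{n,t} = Σ_{i=t-1}^{n-1} I_{i,t-1}·Q_{i+1}`
(zero-based: the one-based `Q_{i+1}` is `QId k b i n`). -/
theorem transversal_decomposition (k : Type*) [Field k] (b : ℕ → ℕ) (n t : ℕ)
    (ht : 2 ≤ t) (htn : t ≤ n) :
    TId k b n t =
      ∑ i ∈ Finset.Icc (t - 1) (n - 1), TId k b i (t - 1) * QId k b i n :=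
  transversal_decomposition_general k b n t ht
end

section
/- The intersection of the two ideals I_{n-1,n-2}·P_n and I_{n-2,n-2}·(P_{n-1}+P_n) equals I_{n-2,n-2}·P_n. -/
open MvPolynomial

/-!
Write `A = P_1⋯P_{n-2} = I_{n-2,n-2}`. Since `A ≤ I_{n-1,n-2}`, the modular law reduces the claim
to `(A·P_{n-1}) ⊓ P_n ≤ A·P_n`. The ideal `A·P_{n-1}` is generated by polynomials not involving the
variables of block `n`, while `P_n` is the kernel of the substitution `φ` killing those variables,
and `c - φ c ∈ P_n` for every `c`. Hence if `f = ∑ cᵢ gᵢ` lies in `P_n`, then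
`f = f - φ f = ∑ (cᵢ - φ cᵢ) gᵢ ∈ (A·P_{n-1})·P_n`.
-/

section Retraction

variable {R : Type*} [CommRing R]

theorem Ideal.span_inf_le_span_mul_of_retraction (φ : R →+* R) {G : Set R} {P : Ideal R}
    (hG : G ⊆ φ.eqLocus (RingHom.id R)) (hP : P ≤ RingHom.ker φ) (hsub : ∀ c, c - φ c ∈ P) :
    Ideal.span G ⊓ P ≤ Ideal.span G * P := by
  rintro f ⟨hfG, hfP⟩
  obtain ⟨n, c, g, rfl⟩ := Submodule.mem_span_set'.1 hfG
  have hfix : ∀ i, φ (g i) = g i := fun i => hG (g i).2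
  have hφ : ∑ i, φ (c i) * g i = 0 := by
    simpa [map_sum, hfix] using hP hfP
  rw [← sub_zero (∑ i, c i • (g i : R)), ← hφ, ← Finset.sum_sub_distrib]
  refine Ideal.sum_mem _ fun i _ => ?_
  rw [smul_eq_mul, ← sub_mul]
  exact Ideal.mul_mem_mul_rev (Ideal.subset_span (g i).2) (hsub _)

open scoped Pointwise in
theorem Set.finsetProd_subset_of_forall_subset {M ι : Type*} [CommMonoid M] {S : Submonoid M}
    (s : Finset ι) {G : ι → Set M} (hG : ∀ j ∈ s, G j ⊆ S) : ∏ j ∈ s, G j ⊆ S := by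
  intro a ha
  obtain ⟨g, hg, rfl⟩ := (Set.mem_finsetProd s G a).1 ha
  exact prod_mem fun j hj => hG j hj (hg hj)

theorem Ideal.mul_inf_mul_add_eq_of_le {A T Q P : Ideal R} (hAT : A ≤ T)
    (hQP : A * Q ⊓ P ≤ A * P) : T * P ⊓ A * (Q + P) = A * P := by
  rw [mul_add, Submodule.add_eq_sup, sup_comm, inf_comm,
    sup_inf_assoc_of_le _ (Ideal.mul_mono_left hAT)]
  exact sup_eq_left.2 <| (inf_le_inf_left _ Ideal.mul_le_right).trans hQP

end Retraction

section Blocks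

variable (k : Type*) [Field k] (b : ℕ → ℕ)

noncomputable def killBlock (r : ℕ) : MvPolynomial (ℕ × ℕ) k →+* MvPolynomial (ℕ × ℕ) k :=
  (aeval fun v : ℕ × ℕ => if v.1 = r ∧ v.2 < b r then 0 else X v).toRingHom

theorem killBlock_X (r : ℕ) (v : ℕ × ℕ) :
    killBlock k b r (X v) = if v.1 = r ∧ v.2 < b r then 0 else X v := by
  simp [killBlock]

theorem PId_le_ker_killBlock (r : ℕ) : PId k b r ≤ RingHom.ker (killBlock k b r) :=
  Ideal.span_le.2 <| by
    rintro _ ⟨i, hi, rfl⟩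
    simp [killBlock_X, hi]

theorem sub_killBlock_mem_PId (r : ℕ) (c : MvPolynomial (ℕ × ℕ) k) :
    c - killBlock k b r c ∈ PId k b r := by
  have : (Ideal.Quotient.mk (PId k b r)).comp (killBlock k b r) = Ideal.Quotient.mk _ := by
    refine MvPolynomial.ringHom_ext (fun a => by simp [killBlock]) fun v => ?_
    rw [RingHom.comp_apply, killBlock_X]
    split_ifs with h
    · have hX : X v ∈ PId k b r := Ideal.subset_span ⟨v.2, h.2, by rw [← h.1]⟩
      exact (Ideal.Quotient.eq_zero_iff_mem.2 hX).symm
    · rfl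
  exact Ideal.Quotient.eq.1 (congrArg (· c) this).symm

open scoped Pointwise in
theorem prod_PId_inf_PId_le_mul {s : Finset ℕ} {r : ℕ} (hr : r ∉ s) :
    (∏ j ∈ s, PId k b j) ⊓ PId k b r ≤ (∏ j ∈ s, PId k b j) * PId k b r := by
  rw [show ∏ j ∈ s, PId k b j = Ideal.span (∏ j ∈ s, {f | ∃ i < b j, f = X (j, i)}) from
    Ideal.prod_span _ _]
  refine Ideal.span_inf_le_span_mul_of_retraction (killBlock k b r)
    (Set.finsetProd_subset_of_forall_subset s fun j hj => ?_)
    (PId_le_ker_killBlock k b r) (sub_killBlock_mem_PId k b r)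
  rintro _ ⟨i, -, rfl⟩
  simp [RingHom.mem_eqLocus, killBlock_X, ne_of_mem_of_not_mem hj hr]

theorem prod_PId_le_TId {p q : ℕ} {s : Finset ℕ} (hq : s.card = q) (hp : s ⊆ Finset.range p) :
    ∏ j ∈ s, PId k b j ≤ TId k b p q :=
  le_iSup_of_le s (le_iSup_of_le ⟨hq, hp⟩ le_rfl)

theorem TId_self (m : ℕ) : TId k b m m = ∏ j ∈ Finset.range m, PId k b j := by
  refine le_antisymm (iSup_le fun s => iSup_le fun ⟨hcard, hsub⟩ => ?_)
    (prod_PId_le_TId k b (Finset.card_range m) subset_rfl)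
  rw [Finset.eq_of_subset_of_card_le hsub (by rw [hcard, Finset.card_range])]

end Blocks

theorem intersection_formula_general (k : Type*) [Field k] (b : ℕ → ℕ) (n : ℕ) :
    (TId k b (n - 1) (n - 2) * PId k b (n - 1)) ⊓
        (TId k b (n - 2) (n - 2) * (PId k b (n - 2) + PId k b (n - 1))) =
      TId k b (n - 2) (n - 2) * PId k b (n - 1) := by
  rcases lt_or_ge n 2 with hn | hn
  · rw [show n - 1 = n - 2 by omega]
    exact Ideal.mul_inf_mul_add_eq_of_le le_rfl inf_le_left
  obtain ⟨m, rfl⟩ := Nat.exists_eq_add_of_le' hn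
  rw [show m + 2 - 1 = m + 1 from rfl, show m + 2 - 2 = m from rfl, TId_self]
  refine Ideal.mul_inf_mul_add_eq_of_le
    (prod_PId_le_TId k b (Finset.card_range m) (Finset.range_subset_range.2 m.le_succ)) ?_
  calc (∏ j ∈ Finset.range m, PId k b j) * PId k b m ⊓ PId k b (m + 1)
      ≤ (∏ j ∈ Finset.range (m + 1), PId k b j) * PId k b (m + 1) := by
        rw [← Finset.prod_range_succ]
        exact prod_PId_inf_PId_le_mul k b Finset.notMem_range_self
    _ ≤ (∏ j ∈ Finset.range m, PId k b j) * PId k b (m + 1) := by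
        rw [Finset.prod_range_succ, mul_right_comm]
        exact Ideal.mul_le_left

/-- `(I_{n-1,n-2}·P_n) ∩ (I_{n-2,n-2}·(P_{n-1}+P_n)) = I_{n-2,n-2}·P_n`
(zero-based: one-based `P_n`, `P_{n-1}` are `PId k b (n-1)`, `PId k b (n-2)`). -/
theorem intersection_formula (k : Type*) [Field k] (b : ℕ → ℕ) (n : ℕ) (hn : 2 ≤ n) :
    (TId k b (n - 1) (n - 2) * PId k b (n - 1)) ⊓
        (TId k b (n - 2) (n - 2) * (PId k b (n - 2) + PId k b (n - 1))) =
      TId k b (n - 2) (n - 2) * PId k b (n - 1) :=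
  intersection_formula_general k b n
end

section
/- The minimal monomial generating set of the transversal monomial ideal I_{n,t} consists exactly of the squarefree monomials x_{j_1 k_1}···x_{j_t k_t} with 1 ≤ j_1 < ··· < j_t ≤ n and 1 ≤ k_r ≤ b_{j_r}; in particular, I_{n,t} is generated in degree t and the number of minimal generators equals Σ_{1≤j_1<···<j_t≤n} b_{j_1}···b_{j_t}. -/
/-!
Since `P_j` is spanned by the variables of block `j`, the product `P_{j_1}⋯P_{j_t}` is spanned by
the monomials picking one variable from each of these blocks, and the union over all `t`-subsets
spans `I_{n,t}`. Such a monomial has exponent `Σ_r e_{(j_r, k_r)}`, which is squarefree of degree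
`t` and determines both the blocks and the chosen variables. Two distinct exponents of the same
degree are incomparable, so no generator divides another, which is minimality; injectivity of
the exponent map gives the count.
-/

open MvPolynomial

theorem Finsupp.eq_of_le_of_degree_eq {σ : Type*} {f g : σ →₀ ℕ} (hle : f ≤ g)
    (hdeg : f.degree = g.degree) : f = g := by
  obtain ⟨c, rfl⟩ := exists_add_of_le hle
  rw [map_add, left_eq_add, degree_eq_zero_iff] at hdeg
  rw [hdeg, add_zero]

namespace MvPolynomial

theorem monomial_notMem_span_of_degree_eq {σ R : Type*} [CommSemiring R] [Nontrivial R]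
    {D : Set (σ →₀ ℕ)} {m : ℕ} (hD : ∀ d ∈ D, d.degree = m) {d : σ →₀ ℕ} (hd : d ∈ D) :
    monomial d (1 : R) ∉ Ideal.span ((fun e => monomial e (1 : R)) '' (D \ {d})) := by
  classical
  rw [mem_ideal_span_monomial_image]
  intro h
  obtain ⟨e, ⟨he, hne⟩, hle⟩ := h d (by simp [support_monomial])
  exact hne (Finsupp.eq_of_le_of_degree_eq hle (by rw [hD e he, hD d hd]))

end MvPolynomial

namespace TransversalIdeal

section Exponent

variable {α β : Type*}

noncomputable def transversalExp (s : Finset α) (κ : α → β) : (α × β) →₀ ℕ :=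
  ∑ j ∈ s, Finsupp.single (j, κ j) 1

theorem transversalExp_apply [DecidableEq α] [DecidableEq β] (s : Finset α) (κ : α → β)
    (j : α) (i : β) :
    transversalExp s κ (j, i) = if j ∈ s ∧ κ j = i then 1 else 0 := by
  simp only [transversalExp, Finsupp.finsetSum_apply, Finsupp.single_apply, Prod.mk.injEq]
  split_ifs with h
  · rw [Finset.sum_eq_single_of_mem j h.1 (fun j' _ hne => if_neg fun h' => hne h'.1)]
    simp [h.2]
  · refine Finset.sum_eq_zero fun j' hj' => if_neg ?_
    rintro ⟨rfl, hi⟩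
    exact h ⟨hj', hi⟩

theorem mem_support_transversalExp (s : Finset α) (κ : α → β) (j : α) (i : β) :
    (j, i) ∈ (transversalExp s κ).support ↔ j ∈ s ∧ κ j = i := by
  classical
  simp [transversalExp_apply]

theorem transversalExp_eq_transversalExp_iff {s s' : Finset α} {κ κ' : α → β} :
    transversalExp s κ = transversalExp s' κ' ↔ s = s' ∧ ∀ j ∈ s, κ j = κ' j := by
  constructor
  · intro h
    have hsupp (j i) : j ∈ s ∧ κ j = i ↔ j ∈ s' ∧ κ' j = i := by
      rw [← mem_support_transversalExp, ← mem_support_transversalExp, h]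
    refine ⟨Finset.ext fun j => ⟨fun hj => ((hsupp j _).1 ⟨hj, rfl⟩).1,
      fun hj => ((hsupp j _).2 ⟨hj, rfl⟩).1⟩, fun j hj => ((hsupp j _).1 ⟨hj, rfl⟩).2.symm⟩
  · rintro ⟨rfl, hκ⟩
    exact Finset.sum_congr rfl fun j hj => by rw [hκ j hj]

theorem degree_transversalExp (s : Finset α) (κ : α → β) :
    (transversalExp s κ).degree = s.card := by
  simp [transversalExp, map_sum]

theorem monomial_transversalExp (R : Type*) [CommSemiring R] (s : Finset α) (κ : α → β) :
    monomial (transversalExp s κ) (1 : R) = ∏ j ∈ s, X (j, κ j) :=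
  monomial_sum_one s _

end Exponent

section Count

variable {α : Type*} [DecidableEq α]

noncomputable def transversalExps (b : α → ℕ) (S : Finset (Finset α)) :
    Finset ((α × ℕ) →₀ ℕ) :=
  S.biUnion fun s => (s.pi fun j => Finset.range (b j)).image fun p =>
    transversalExp s fun j => if h : j ∈ s then p j h else 0

theorem mem_transversalExps {b : α → ℕ} {S : Finset (Finset α)} {d : (α × ℕ) →₀ ℕ} :
    d ∈ transversalExps b S ↔
      ∃ s ∈ S, ∃ κ : α → ℕ, (∀ j ∈ s, κ j < b j) ∧ d = transversalExp s κ := by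
  simp only [transversalExps, Finset.mem_biUnion, Finset.mem_image, Finset.mem_pi,
    Finset.mem_range]
  refine exists_congr fun s => and_congr_right fun _ => ⟨?_, ?_⟩
  · rintro ⟨p, hp, rfl⟩
    exact ⟨_, fun j hj => by simpa [hj] using hp j hj, rfl⟩
  · rintro ⟨κ, hκ, rfl⟩
    refine ⟨fun j _ => κ j, hκ, transversalExp_eq_transversalExp_iff.2 ⟨rfl, fun j hj => ?_⟩⟩
    simp [hj]

theorem card_transversalExps (b : α → ℕ) (S : Finset (Finset α)) :
    (transversalExps b S).card = ∑ s ∈ S, ∏ j ∈ s, b j := by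
  rw [transversalExps, Finset.card_biUnion]
  · refine Finset.sum_congr rfl fun s _ => ?_
    rw [Finset.card_image_of_injOn, Finset.card_pi]
    · simp
    · intro p _ p' _ h
      funext j hj
      simpa [hj] using (transversalExp_eq_transversalExp_iff.1 h).2 j hj
  · intro s _ s' _ hne
    simp only [Function.onFun, Finset.disjoint_left, Finset.mem_image]
    rintro _ ⟨p, _, rfl⟩ ⟨p', _, h⟩
    exact hne (transversalExp_eq_transversalExp_iff.1 h).1.symm

theorem degree_of_mem_transversalExps {b : α → ℕ} {u : Finset α} {t : ℕ} {d : (α × ℕ) →₀ ℕ}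
    (hd : d ∈ transversalExps b (u.powersetCard t)) : d.degree = t := by
  obtain ⟨s, hs, κ, -, rfl⟩ := mem_transversalExps.1 hd
  rw [degree_transversalExp, (Finset.mem_powersetCard.1 hs).2]

end Count

section Ideal

variable {k : Type*} [Field k] {b : ℕ → ℕ}

theorem prod_PId_eq_span (s : Finset ℕ) :
    ∏ j ∈ s, PId k b j =
      Ideal.span {f | ∃ κ : ℕ → ℕ, (∀ j ∈ s, κ j < b j) ∧ f = ∏ j ∈ s, X (j, κ j)} := by
  unfold PId
  rw [Ideal.prod_span]
  congr 1
  ext f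
  simp only [Set.mem_finsetProd, Set.mem_ofPred_eq]
  constructor
  · rintro ⟨g, hg, rfl⟩
    choose! κ hκb hκ using fun j (hj : j ∈ s) => hg hj
    exact ⟨κ, hκb, Finset.prod_congr rfl hκ⟩
  · rintro ⟨κ, hκ, rfl⟩
    exact ⟨fun j => X (j, κ j), fun hj => ⟨_, hκ _ hj, rfl⟩, rfl⟩

theorem TId_eq_span (n t : ℕ) :
    TId k b n t = Ideal.span {f | ∃ s : Finset ℕ, s.card = t ∧ s ⊆ Finset.range n ∧
      ∃ κ : ℕ → ℕ, (∀ j ∈ s, κ j < b j) ∧ f = ∏ j ∈ s, X (j, κ j)} := by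
  have hunion : {f : MvPolynomial (ℕ × ℕ) k | ∃ s : Finset ℕ, s.card = t ∧
      s ⊆ Finset.range n ∧ ∃ κ : ℕ → ℕ, (∀ j ∈ s, κ j < b j) ∧ f = ∏ j ∈ s, X (j, κ j)} =
      ⋃ (s : Finset ℕ) (_ : s.card = t ∧ s ⊆ Finset.range n),
        {f | ∃ κ : ℕ → ℕ, (∀ j ∈ s, κ j < b j) ∧ f = ∏ j ∈ s, X (j, κ j)} := by
    ext f
    simp only [Set.mem_iUnion, Set.mem_ofPred_eq, exists_prop, and_assoc]
  simp only [TId, hunion, Ideal.span_iUnion, prod_PId_eq_span]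

theorem transversalGens_eq_image (n t : ℕ) :
    {f : MvPolynomial (ℕ × ℕ) k | ∃ s : Finset ℕ, s.card = t ∧ s ⊆ Finset.range n ∧
      ∃ κ : ℕ → ℕ, (∀ j ∈ s, κ j < b j) ∧ f = ∏ j ∈ s, X (j, κ j)} =
      (fun d => monomial d 1) '' ↑(transversalExps b ((Finset.range n).powersetCard t)) := by
  ext f
  simp only [Set.mem_ofPred_eq, Set.mem_image, Finset.mem_coe, mem_transversalExps,
    Finset.mem_powersetCard]
  constructor
  · rintro ⟨s, hcard, hsub, κ, hκ, rfl⟩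
    exact ⟨_, ⟨s, ⟨hsub, hcard⟩, κ, hκ, rfl⟩, monomial_transversalExp k s κ⟩
  · rintro ⟨_, ⟨s, ⟨hsub, hcard⟩, κ, hκ, rfl⟩, rfl⟩
    exact ⟨s, hcard, hsub, κ, hκ, monomial_transversalExp k s κ⟩

end Ideal

end TransversalIdeal

open TransversalIdeal in
theorem transversal_min_gens_general (k : Type*) [Field k] (b : ℕ → ℕ) (n t : ℕ)
    (G : Set (MvPolynomial (ℕ × ℕ) k))
    (hGdef : G = {f | ∃ s : Finset ℕ, s.card = t ∧ s ⊆ Finset.range n ∧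
      ∃ κ : ℕ → ℕ, (∀ j ∈ s, κ j < b j) ∧ f = ∏ j ∈ s, X (j, κ j)}) :
    TId k b n t = Ideal.span G ∧
      (∀ g ∈ G, g.totalDegree = t) ∧
      (∀ g ∈ G, g ∉ Ideal.span (G \ {g})) ∧
      G.ncard = ∑ s ∈ Finset.powersetCard t (Finset.range n), ∏ j ∈ s, b j := by
  have hmonomial_inj : Function.Injective fun d : (ℕ × ℕ) →₀ ℕ => monomial d (1 : k) :=
    monomial_left_injective one_ne_zero
  subst hGdef
  refine ⟨TId_eq_span n t, ?_, ?_, ?_⟩ <;> rw [transversalGens_eq_image]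
  · rintro _ ⟨d, hd, rfl⟩
    rw [totalDegree_monomial _ one_ne_zero]
    exact degree_of_mem_transversalExps hd
  · rintro _ ⟨d, hd, rfl⟩
    rw [← Set.image_singleton (f := fun d => monomial d (1 : k)), ← Set.image_sdiff hmonomial_inj]
    exact monomial_notMem_span_of_degree_eq (fun _ => degree_of_mem_transversalExps) hd
  · rw [Set.ncard_image_of_injective _ hmonomial_inj, Set.ncard_coe_finset,
      card_transversalExps]

/-- the minimal monomial generating set of `I_{n,t}` consists exactly of the
squarefree monomials `x_{j_1 k_1}⋯x_{j_t k_t}` (`j_1<⋯<j_t < n`, `k_r < b_{j_r}`,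
zero-based); they all have degree `t`, none lies in the ideal generated by the others, and
there are `Σ_{j_1<⋯<j_t} b_{j_1}⋯b_{j_t}` of them. -/
theorem transversal_min_gens (k : Type*) [Field k] (b : ℕ → ℕ) (n t : ℕ)
    (ht : 1 ≤ t) (htn : t ≤ n)
    (G : Set (MvPolynomial (ℕ × ℕ) k))
    (hGdef : G = {f | ∃ s : Finset ℕ, s.card = t ∧ s ⊆ Finset.range n ∧
      ∃ κ : ℕ → ℕ, (∀ j ∈ s, κ j < b j) ∧ f = ∏ j ∈ s, X (j, κ j)}) :
    TId k b n t = Ideal.span G ∧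
      (∀ g ∈ G, g.totalDegree = t) ∧
      (∀ g ∈ G, g ∉ Ideal.span (G \ {g})) ∧
      G.ncard = ∑ s ∈ Finset.powersetCard t (Finset.range n), ∏ j ∈ s, b j :=
  transversal_min_gens_general k b n t G hGdef
end

section
/- For ideals generated by disjoint sets of variables, intersection distributes: (I_{s,t} + I_{s-1,t-1}·Q) ∩ (I_{s,t-1}·Q) = I_{s,t}·Q + I_{s-1,t-1}·Q, where Q is generated by variables disjoint from those appearing in I_{s,t}, I_{s,t-1}, I_{s-1,t-1}, and consequently this equals I_{s-1,t-1}·Q since I_{s,t} ⊆ I_{s-1,t-1}. -/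
open MvPolynomial

/-!
Substituting `0` for the variables of `Q` is a ring retraction `φ` that fixes the monomial
generators of `I = I_{s,t}`, kills `Q`, and satisfies `r - φ r ∈ Q` for every `r`. For `f ∈ I`
one gets `f - φ f ∈ I·Q` (from `r a - φ (r a) = r (a - φ a) + φ a (r - φ r)`), and `φ f = 0`
when moreover `f ∈ Q`; hence `I ∩ Q = I·Q`. Since `I_{s,t} ⊆ I_{s-1,t-1} ⊆ I_{s,t-1}`, the
modular law reduces the claim to `I_{s,t} ∩ I_{s,t-1}·Q ⊆ I_{s,t} ∩ Q = I_{s,t}·Q`.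
-/

open scoped Pointwise

theorem Ideal.span_inf_le_span_mul_of_fixed {R : Type*} [CommRing R] (φ : R →+* R)
    {T : Set R} {Q : Ideal R} (hT : ∀ a ∈ T, φ a = a) (hQ : Q ≤ RingHom.ker φ)
    (hφ : ∀ r, r - φ r ∈ Q) :
    Ideal.span T ⊓ Q ≤ Ideal.span T * Q := by
  have hmap : ∀ f ∈ Ideal.span T, φ f ∈ Ideal.span T := fun f hf => by
    simpa [Ideal.map_span, Set.image_congr hT] using Ideal.mem_map_of_mem φ hf
  have hsub : ∀ f ∈ Ideal.span T, f - φ f ∈ Ideal.span T * Q := fun f hf => by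
    induction hf using Submodule.span_induction with
    | mem a ha => simp [hT a ha]
    | zero => simp
    | add x y _ _ hx hy => simpa [add_sub_add_comm] using add_mem hx hy
    | smul r x hx ih =>
      have h : r * x - φ (r * x) = r * (x - φ x) + φ x * (r - φ r) := by rw [map_mul]; ring
      rw [smul_eq_mul, h]
      exact add_mem (Ideal.mul_mem_left _ _ ih) (Ideal.mul_mem_mul (hmap x hx) (hφ r))
  rintro f ⟨hfT, hfQ⟩
  simpa [RingHom.mem_ker.mp (hQ hfQ)] using hsub f hfT

theorem MvPolynomial.span_inf_span_X_le_mul {σ R : Type*} [CommRing R] {S : Set σ}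
    {T : Set (MvPolynomial σ R)} (hT : T ⊆ supported R Sᶜ) :
    Ideal.span T ⊓ Ideal.span (X '' S) ≤ Ideal.span T * Ideal.span (X '' S) := by
  classical
  set Q : Ideal (MvPolynomial σ R) := Ideal.span (X '' S)
  set φ : MvPolynomial σ R →ₐ[R] MvPolynomial σ R := aeval (Sᶜ.indicator X)
  refine Ideal.span_inf_le_span_mul_of_fixed φ.toRingHom (fun a ha => ?_) ?_ fun r => ?_
  · obtain ⟨g, rfl⟩ := (supported_eq_range_rename Sᶜ).le (hT ha)
    have h : Sᶜ.indicator X ∘ Subtype.val = (X ∘ Subtype.val : ↥Sᶜ → MvPolynomial σ R) :=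
      _root_.funext fun v => Set.indicator_of_mem v.2 _
    change aeval (Sᶜ.indicator X) (rename Subtype.val g) = rename Subtype.val g
    rw [aeval_rename, h, rename_eq_aeval]
  · refine Ideal.span_le.mpr ?_
    rintro _ ⟨v, hv, rfl⟩
    simp [φ, hv]
  · have hφ : (Ideal.Quotient.mkₐ R Q).comp φ = Ideal.Quotient.mkₐ R Q := by
      refine algHom_ext fun v => ?_
      by_cases hv : v ∈ S
      · simp only [AlgHom.comp_apply, φ, aeval_X,
          Set.indicator_of_notMem (Set.notMem_compl_iff.mpr hv), map_zero]
        exact (Ideal.Quotient.eq_zero_iff_mem.mpr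
          (Ideal.subset_span (Set.mem_image_of_mem X hv))).symm
      · simp [φ, hv]
    exact Ideal.Quotient.eq.mp (AlgHom.congr_fun hφ r).symm

section Transversal

variable {k : Type*} [Field k] {b : ℕ → ℕ}

theorem QId_eq_span_X_image (r n : ℕ) :
    QId k b r n = Ideal.span (X '' {v | v.1 ∈ Finset.Ico r n ∧ v.2 < b v.1}) := by
  rw [QId, Ideal.sum_eq_sup]
  refine le_antisymm (Finset.sup_le fun j hj => Ideal.span_le.mpr ?_) (Ideal.span_le.mpr ?_)
  · rintro _ ⟨i, hi, rfl⟩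
    exact Ideal.subset_span ⟨(j, i), ⟨hj, hi⟩, rfl⟩
  · rintro _ ⟨v, ⟨hv, hvb⟩, rfl⟩
    exact Finset.le_sup (f := PId k b) hv (Ideal.subset_span ⟨v.2, hvb, rfl⟩)

theorem TId_eq_span (p q : ℕ) :
    TId k b p q = Ideal.span (⋃ (c : Finset ℕ) (_ : c.card = q ∧ c ⊆ Finset.range p),
      ∏ j ∈ c, {f : MvPolynomial (ℕ × ℕ) k | ∃ i < b j, f = X (j, i)}) := by
  simp only [TId, PId, Ideal.span, Submodule.span_iUnion₂, Ideal.prod_span]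

theorem TId_inf_QId_le_mul {p r : ℕ} (q n : ℕ) (hpr : p ≤ r) :
    TId k b p q ⊓ QId k b r n ≤ TId k b p q * QId k b r n := by
  rw [TId_eq_span, QId_eq_span_X_image]
  refine MvPolynomial.span_inf_span_X_le_mul fun f hf => ?_
  obtain ⟨c, ⟨-, hc⟩, hf⟩ := Set.mem_iUnion₂.mp hf
  obtain ⟨g, hg, rfl⟩ := (Set.mem_finsetProd _ _ _).mp hf
  refine Subalgebra.prod_mem _ fun j hj => ?_
  obtain ⟨i, -, hgj⟩ := hg hj
  have hjp := Finset.mem_range.mp (hc hj)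
  rw [hgj, X_mem_supported]
  simp only [Set.mem_compl_iff, Set.mem_ofPred_eq, Finset.mem_Ico]
  omega

theorem TId_le_TId {p p' q q' : ℕ}
    (h : ∀ c : Finset ℕ, c.card = q → c ⊆ Finset.range p →
      ∃ c' ⊆ c, c'.card = q' ∧ c' ⊆ Finset.range p') :
    TId k b p q ≤ TId k b p' q' := by
  refine iSup₂_le fun c hc => ?_
  obtain ⟨c', hc'c, hcard, hrange⟩ := h c hc.1 hc.2
  calc ∏ j ∈ c, PId k b j
      = (∏ j ∈ c \ c', PId k b j) * ∏ j ∈ c', PId k b j := (Finset.prod_sdiff hc'c).symm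
    _ ≤ ∏ j ∈ c', PId k b j := Ideal.mul_le_right
    _ ≤ TId k b p' q' := le_iSup₂_of_le c' ⟨hcard, hrange⟩ le_rfl

theorem TId_mono_left {p p' : ℕ} (q : ℕ) (hp : p ≤ p') : TId k b p q ≤ TId k b p' q :=
  TId_le_TId fun c hcard hrange =>
    ⟨c, subset_rfl, hcard, hrange.trans (Finset.range_subset_range.mpr hp)⟩

theorem TId_le_TId_sub_one (p q : ℕ) : TId k b p q ≤ TId k b (p - 1) (q - 1) := by
  refine TId_le_TId fun c hcard hrange => ?_
  have hcard' : q - 1 ≤ (c.erase (p - 1)).card := by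
    have := Finset.pred_card_le_card_erase (s := c) (a := p - 1)
    omega
  obtain ⟨c', hc', hcard''⟩ := Finset.exists_subset_card_eq hcard'
  refine ⟨c', hc'.trans (Finset.erase_subset _ _), hcard'', fun x hx => ?_⟩
  obtain ⟨hxp, hxc⟩ := Finset.mem_erase.mp (hc' hx)
  have := Finset.mem_range.mp (hrange hxc)
  exact Finset.mem_range.mpr (by omega)

end Transversal

theorem transversal_distributes_general (k : Type*) [Field k] (b : ℕ → ℕ) (n t s : ℕ) :
    (TId k b s t + TId k b (s - 1) (t - 1) * QId k b s n) ⊓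
        (TId k b s (t - 1) * QId k b s n) =
      TId k b s t * QId k b s n + TId k b (s - 1) (t - 1) * QId k b s n ∧
    TId k b s t * QId k b s n + TId k b (s - 1) (t - 1) * QId k b s n =
      TId k b (s - 1) (t - 1) * QId k b s n := by
  set A := TId k b s t
  set B := TId k b (s - 1) (t - 1)
  set Q := QId k b s n
  have hAB : A ≤ B := TId_le_TId_sub_one s t
  have hBQ : B * Q ≤ TId k b s (t - 1) * Q :=
    Ideal.mul_mono_left (TId_mono_left _ (Nat.sub_le s 1))
  have hsum : A * Q + B * Q = B * Q := sup_eq_right.mpr (Ideal.mul_mono_left hAB)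
  refine ⟨?_, hsum⟩
  rw [hsum, Submodule.add_eq_sup, sup_comm, sup_inf_assoc_of_le _ hBQ, sup_eq_left]
  calc A ⊓ (TId k b s (t - 1) * Q)
      ≤ A ⊓ Q := inf_le_inf_left _ Ideal.mul_le_right
    _ ≤ A * Q := TId_inf_QId_le_mul t n le_rfl
    _ ≤ B * Q := Ideal.mul_mono_left hAB

/-- with `Q = Q_{s+1}` (zero-based `QId k b s n`), intersection distributes:
`(I_{s,t} + I_{s-1,t-1}·Q) ∩ (I_{s,t-1}·Q) = I_{s,t}·Q + I_{s-1,t-1}·Q`, and this equals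
`I_{s-1,t-1}·Q` since `I_{s,t} ⊆ I_{s-1,t-1}`. -/
theorem transversal_distributes (k : Type*) [Field k] (b : ℕ → ℕ) (n t s : ℕ)
    (ht : 2 ≤ t) (hts : t ≤ s) (hsn : s ≤ n - 1) :
    (TId k b s t + TId k b (s - 1) (t - 1) * QId k b s n) ⊓
        (TId k b s (t - 1) * QId k b s n) =
      TId k b s t * QId k b s n + TId k b (s - 1) (t - 1) * QId k b s n ∧
    TId k b s t * QId k b s n + TId k b (s - 1) (t - 1) * QId k b s n =
      TId k b (s - 1) (t - 1) * QId k b s n :=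
  transversal_distributes_general k b n t s
end
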